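/- arXiv:0908.3643 — 3 statements merged into one kernel-verified Lean document; each statement's English description precedes it below -/
import Mathlib

section
/- Let f be the generating function of a critical offspring distribution (f(1) = 1, f'(1) = 1) which is analytic on [0, ρ₀] for some ρ₀ > 1 with f(ρ₀) < ∞, and suppose f(z) ≤ z + k₁(z-1)² for 1 ≤ z ≤ ρ₀. Define f_1(z) = z and f_{K+1}(z) = z·f(f_K(z)). Then there exist constants α > 1 and β > 0 such that for all R ≥ 1 and all z ∈ [1, 1 + β/(1 + α(R-1))²], one has f_R(z) ≤ 1 + (1 + α(R-1))(z - 1). -/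
open Set

/-- Auxiliary bounds: from `ε t² ≤ β` with `1 ≤ c ≤ t`, `0 ≤ ε` we get `cε ≤ β` and `c²ε ≤ β`. -/
lemma stmt3_aux_bounds (β c t ε : ℝ) (hc1 : 1 ≤ c) (hct : c ≤ t)
    (hε : 0 ≤ ε) (hεt : ε * t ^ 2 ≤ β) : c * ε ≤ β ∧ ε * c ^ 2 ≤ β ∧ ε ≤ β := by
  have ht1 : (1 : ℝ) ≤ t := le_trans hc1 hct
  have hc0 : (0 : ℝ) ≤ c := by linarith
  have hc2t2 : c ^ 2 ≤ t ^ 2 := by nlinarith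
  have h2 : ε * c ^ 2 ≤ β := by nlinarith
  have h1 : c * ε ≤ β := by
    have h := le_mul_of_one_le_right (mul_nonneg hc0 hε) hc1
    nlinarith
  have h3 : ε ≤ β := by
    have ht2 : (1 : ℝ) ≤ t ^ 2 := by nlinarith
    have h := le_mul_of_one_le_right hε ht2
    linarith
  exact ⟨h1, h2, h3⟩

/-- The key arithmetic inequality for the inductive step. -/
lemma stmt3_aux_main (β k₁ c t ε : ℝ) (hβ : 0 < β) (hk : 0 < k₁) (hc1 : 1 ≤ c)
    (hct : c ≤ t) (hε : 0 ≤ ε) (hεt : ε * t ^ 2 ≤ β) :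
    (1 + ε) * ((1 + c * ε) + k₁ * (c * ε) ^ 2) ≤ 1 + (c + (1 + β) * (1 + k₁ * β)) * ε := by
  obtain ⟨hεc, hεc2, hεβ⟩ := stmt3_aux_bounds β c t ε hc1 hct hε hεt
  have e1 : c * ε * ε ≤ β * ε := by nlinarith
  have e2 : c ^ 2 * ε * ε ≤ β * ε := by nlinarith
  have e3 : c ^ 2 * ε * ε * ε ≤ β * β * ε := by
    nlinarith [mul_le_mul_of_nonneg_right e2 hε,
      mul_le_mul_of_nonneg_left hεβ (mul_nonneg hβ.le hε)]
  nlinarith [mul_le_mul_of_nonneg_left e2 hk.le, mul_le_mul_of_nonneg_left e3 hk.le,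
    mul_le_mul_of_nonneg_left e1 hk.le]

/-- Iterates `f₁(z) = z`, `f_{K+1}(z) = z f(f_K(z))` of a critical offspring generating
function `f` satisfy `f_R(z) ≤ 1 + (1 + α(R-1))(z-1)` for `z` in a suitable shrinking
interval above `1`. -/
theorem stmt3 (f : ℝ → ℝ) (p : ℕ → ℝ) (ρ₀ k₁ : ℝ) (hρ₀ : 1 < ρ₀)
    (hp : ∀ n, 0 ≤ p n) (hpsum : ∑' n : ℕ, p n = 1)
    (hcrit : ∑' n : ℕ, (n : ℝ) * p n = 1)
    (hfrep : ∀ z ∈ Icc (0 : ℝ) ρ₀, Summable (fun n : ℕ => p n * z ^ n) ∧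
      f z = ∑' n : ℕ, p n * z ^ n)
    (hk₁ : 0 < k₁)
    (hbound : ∀ z ∈ Icc (1 : ℝ) ρ₀, f z ≤ z + k₁ * (z - 1) ^ 2)
    (fIter : ℕ → ℝ → ℝ)
    (hIter1 : ∀ z, fIter 1 z = z)
    (hIterSucc : ∀ K : ℕ, 1 ≤ K → ∀ z, fIter (K + 1) z = z * f (fIter K z)) :
    ∃ α > (1 : ℝ), ∃ β > (0 : ℝ), ∀ R : ℕ, 1 ≤ R →
      ∀ z ∈ Icc (1 : ℝ) (1 + β / (1 + α * ((R : ℝ) - 1)) ^ 2),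
        fIter R z ≤ 1 + (1 + α * ((R : ℝ) - 1)) * (z - 1) := by
  -- monotonicity of f on [0, ρ₀]
  have hmono : ∀ a b : ℝ, 0 ≤ a → a ≤ b → b ≤ ρ₀ → f a ≤ f b := by
    intro a b ha hab hb
    obtain ⟨hsa, hfa⟩ := hfrep a ⟨ha, hab.trans hb⟩
    obtain ⟨hsb, hfb⟩ := hfrep b ⟨ha.trans hab, hb⟩
    rw [hfa, hfb]
    exact Summable.tsum_le_tsum
      (fun n => mul_le_mul_of_nonneg_left (pow_le_pow_left₀ ha hab n) (hp n)) hsa hsb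
  have hf1 : f 1 = 1 := by
    obtain ⟨hs, hf⟩ := hfrep 1 ⟨by norm_num, by linarith⟩
    simpa [hpsum] using hf
  obtain ⟨β, hβdef⟩ : ∃ β : ℝ, β = ρ₀ - 1 := ⟨_, rfl⟩
  have hβ : 0 < β := by rw [hβdef]; linarith
  obtain ⟨α, hαdef⟩ : ∃ α : ℝ, α = (1 + β) * (1 + k₁ * β) := ⟨_, rfl⟩
  have hα : 1 < α := by
    have h1 : 0 < k₁ * β := mul_pos hk₁ hβ
    have h2 : 0 < k₁ * β * β := mul_pos h1 hβ
    rw [hαdef]; nlinarith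
  refine ⟨α, hα, β, hβ, ?_⟩
  have key : ∀ R : ℕ, 1 ≤ R → ∀ z : ℝ, 1 ≤ z → z ≤ 1 + β / (1 + α * ((R : ℝ) - 1)) ^ 2 →
      1 ≤ fIter R z ∧ fIter R z ≤ 1 + (1 + α * ((R : ℝ) - 1)) * (z - 1) := by
    intro R hR
    induction R, hR using Nat.le_induction with
    | base =>
      intro z hz1 hz2
      rw [hIter1]
      refine ⟨hz1, ?_⟩
      norm_num
    | succ K hK ih =>
      intro z hz1 hz2
      have hKc : (1 : ℝ) ≤ (K : ℝ) := by exact_mod_cast hK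
      have hcast : ((K + 1 : ℕ) : ℝ) - 1 = (K : ℝ) := by push_cast; ring
      rw [hcast] at hz2 ⊢
      obtain ⟨t, htdef⟩ : ∃ t : ℝ, t = 1 + α * (K : ℝ) := ⟨_, rfl⟩
      obtain ⟨c, hcdef⟩ : ∃ c : ℝ, c = 1 + α * ((K : ℝ) - 1) := ⟨_, rfl⟩
      rw [← htdef] at hz2 ⊢
      rw [← hcdef] at ih
      have hαK : (1 : ℝ) ≤ α * (K : ℝ) := by
        calc (1 : ℝ) = 1 * 1 := by ring
        _ ≤ α * (K : ℝ) := mul_le_mul hα.le hKc zero_le_one (by linarith)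
      have ht1 : (1 : ℝ) < t := by rw [htdef]; linarith
      have hc1 : (1 : ℝ) ≤ c := by
        have : (0 : ℝ) ≤ α * ((K : ℝ) - 1) := mul_nonneg (by linarith) (by linarith)
        rw [hcdef]; linarith
      have hct : c ≤ t := by
        have : α * ((K : ℝ) - 1) ≤ α * (K : ℝ) :=
          mul_le_mul_of_nonneg_left (by linarith) (by linarith)
        rw [hcdef, htdef]; linarith
      have hε : 0 ≤ z - 1 := by linarith
      have ht2 : (0 : ℝ) < t ^ 2 := by positivity
      have hεt : (z - 1) * t ^ 2 ≤ β := by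
        have : z - 1 ≤ β / t ^ 2 := by linarith
        exact (le_div_iff₀ ht2).mp this
      obtain ⟨hcε, hεc2, hεβ⟩ := stmt3_aux_bounds β c t (z - 1) hc1 hct hε hεt
      -- z lies in the K-interval
      have hzK : z ≤ 1 + β / c ^ 2 := by
        have hc2 : (0 : ℝ) < c ^ 2 := by positivity
        have : z - 1 ≤ β / c ^ 2 := (le_div_iff₀ hc2).mpr hεc2
        linarith
      obtain ⟨hw1, hw2⟩ := ih z hz1 hzK
      have hu2 : 1 + c * (z - 1) ≤ ρ₀ := by rw [hβdef] at hcε; linarith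
      have hu1 : (1 : ℝ) ≤ 1 + c * (z - 1) := by
        have := mul_nonneg (by linarith : (0:ℝ) ≤ c) hε
        linarith
      have hfwu : f (fIter K z) ≤ f (1 + c * (z - 1)) :=
        hmono _ _ (by linarith) hw2 hu2
      have hfu : f (1 + c * (z - 1)) ≤ (1 + c * (z - 1)) + k₁ * ((1 + c * (z - 1)) - 1) ^ 2 :=
        hbound _ ⟨hu1, hu2⟩
      have hfw1 : 1 ≤ f (fIter K z) := by
        have := hmono 1 (fIter K z) (by norm_num) hw1 (le_trans hw2 hu2)
        rwa [hf1] at this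
      rw [hIterSucc K hK z]
      constructor
      · have h := mul_le_mul hz1 hfw1 zero_le_one (by linarith)
        simpa using h
      · have hfw : f (fIter K z) ≤ (1 + c * (z - 1)) + k₁ * (c * (z - 1)) ^ 2 := by
          have h := le_trans hfwu hfu
          have he : (1 + c * (z - 1)) - 1 = c * (z - 1) := by ring
          rwa [he] at h
        have hzfw : z * f (fIter K z) ≤ z * ((1 + c * (z - 1)) + k₁ * (c * (z - 1)) ^ 2) :=
          mul_le_mul_of_nonneg_left hfw (by linarith)
        have hmain := stmt3_aux_main β k₁ c t (z - 1) hβ hk₁ hc1 hct hε hεt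
        have hz' : (1 + (z - 1)) = z := by ring
        rw [hz'] at hmain
        have hta : t = c + (1 + β) * (1 + k₁ * β) := by rw [htdef, hcdef, hαdef]; ring
        rw [hta]
        linarith
  intro R hR z hz
  exact (key R hR z hz.1 hz.2).2
end

section
/- Consider a birth and death chain on ℕ with probabilities α_n to go n → n+1 and β_n = 1 - α_n to go n → n-1 (α_0 = 1), and set L_n = Π_{k=1}^n α_k/β_k. The chain is recurrent if and only if Σ_{n=1}^∞ 1/L_n = ∞. -/
/-!
The escape probability `q x = 1 - ℙₓ(hit 0)` vanishes at `0`, is harmonic for the chain off `0`,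
and (by first-step analysis of the first-hitting-time probabilities) dominates every other such
function bounded by `1`. A harmonic function vanishing at `0` is determined by its value at `1`,
so it is a multiple of the scale function `s x = ∑_{n<x} 1 / L n`; hence `q = q 1 • s`.
If `s` is unbounded, `q ≤ 1` forces `q 1 = 0`; if `s → S < ∞`, then `s / S` competes with `q`,
so `q 1 ≥ 1 / S > 0`. Returning to `0` from `0` is hitting `0` from `1`, so the chain is recurrent
exactly when `q 1 = 0`.
-/

open Finset

/-- Probability of the path `w 0, w 1, …, w t` under the transition kernel `P`. -/
def pathProb (P : ℕ → ℕ → ℝ) (t : ℕ) (w : Fin (t + 1) → Fin (t + 1)) : ℝ :=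
  ∏ i : Fin t, P (w i.castSucc : ℕ) (w i.succ : ℕ)

/-- Probability that the walk started at `0` first returns to `0` at time `t`. -/
def firstReturnProb (P : ℕ → ℕ → ℝ) (t : ℕ) : ℝ :=
  ∑ w : Fin (t + 1) → Fin (t + 1),
    if (w 0 : ℕ) = 0 ∧ (w (Fin.last t) : ℕ) = 0 ∧
        (∀ i : Fin (t + 1), i ≠ 0 → i ≠ Fin.last t → (w i : ℕ) ≠ 0) then
      pathProb P t w
    else 0

/-- The walk is recurrent if it returns to the starting vertex with probability one. -/
def IsRecurrent (P : ℕ → ℕ → ℝ) : Prop :=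
  ∑' t : ℕ, firstReturnProb P (t + 1) = 1

/-- Transition probabilities of the birth and death chain on `ℕ`: from `n ≥ 1` go to
`n+1` with probability `α n` and to `n-1` with probability `1 - α n`; from `0` go
to `1` with probability `1`. -/
noncomputable def bdTrans (a : ℕ → ℝ) : ℕ → ℕ → ℝ := fun n m =>
  if n = 0 then (if m = 1 then 1 else 0)
  else if m = n + 1 then a n
  else if m = n - 1 then 1 - a n
  else 0

/-- Paths `x → v 0 → ⋯ → v t` first hitting `0` at the last step, truncated to states below `N`;
for a nearest-neighbour chain the truncation is harmless once `N` exceeds the reachable range. -/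
noncomputable def firstHitSum (P : ℕ → ℕ → ℝ) (N t x : ℕ) : ℝ :=
  ∑ v : Fin (t + 1) → Fin N,
    if (v (Fin.last t) : ℕ) = 0 ∧ ∀ j : Fin t, (v j.castSucc : ℕ) ≠ 0 then
      P x (v 0) * ∏ i : Fin t, P (v i.castSucc) (v i.succ)
    else 0

lemma Fintype.sum_fin_succ_pi {M α : Type*} [AddCommMonoid M] [Fintype α] {n : ℕ}
    (g : (Fin (n + 1) → α) → M) : ∑ w, g w = ∑ y, ∑ v : Fin n → α, g (Fin.cons y v) := by
  rw [← (Fin.consEquiv fun _ => α).sum_comp g, Fintype.sum_prod_type]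
  rfl

lemma firstHitSum_succ (P : ℕ → ℕ → ℝ) (N t x : ℕ) :
    firstHitSum P N (t + 1) x =
      ∑ y : Fin N, P x y * if (y : ℕ) = 0 then 0 else firstHitSum P N t y := by
  rw [firstHitSum, Fintype.sum_fin_succ_pi]
  refine sum_congr rfl fun y _ => ?_
  split_ifs with hy
  · simp [Fin.forall_fin_succ, hy]
  · rw [firstHitSum, mul_sum]
    refine sum_congr rfl fun v _ => ?_
    simp [Fin.forall_fin_succ, hy, Fin.prod_univ_succ]

lemma firstHitSum_zero (P : ℕ → ℕ → ℝ) (N x : ℕ) [NeZero N] :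
    firstHitSum P N 0 x = P x 0 := by
  simp [firstHitSum, Fintype.sum_fin_succ_pi, Fin.val_eq_zero_iff]

lemma firstReturnProb_succ (P : ℕ → ℕ → ℝ) (t : ℕ) :
    firstReturnProb P (t + 1) = firstHitSum P (t + 2) t 0 := by
  rw [firstReturnProb, Fintype.sum_fin_succ_pi, sum_eq_single 0]
  · refine sum_congr rfl fun v _ => ?_
    simp only [Fin.forall_fin_succ (n := t + 1), Fin.forall_fin_succ' (n := t)]
    simp [pathProb, Fin.prod_univ_succ]
  · intro y _ hy
    simp [Fin.val_eq_zero_iff, hy]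
  · simp

lemma sum_bdTrans_zero_mul (a g : ℕ → ℝ) {N : ℕ} (hN : 1 < N) :
    ∑ y : Fin N, bdTrans a 0 y * g y = g 1 := by
  rw [Fin.sum_univ_eq_sum_range (fun y => bdTrans a 0 y * g y)]
  simp [bdTrans, hN]

lemma sum_bdTrans_succ_mul (a g : ℕ → ℝ) {N x : ℕ} (hN : x + 2 < N) :
    ∑ y : Fin N, bdTrans a (x + 1) y * g y = a (x + 1) * g (x + 2) + (1 - a (x + 1)) * g x := by
  rw [Fin.sum_univ_eq_sum_range (fun y => bdTrans a (x + 1) y * g y),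
    sum_eq_add_of_mem (x + 2) x (by simp; omega) (by simp; omega) (by omega)]
  · have : x ≠ x + 2 := by omega
    simp [bdTrans, this]
  · rintro y - ⟨h2, h0⟩
    simp [bdTrans, h2, h0]

noncomputable def firstHitProb (a : ℕ → ℝ) : ℕ → ℕ → ℝ
  | 0, x => if x = 0 then 1 else 0
  | _ + 1, 0 => 0
  | t + 1, x + 1 => a (x + 1) * firstHitProb a t (x + 2) + (1 - a (x + 1)) * firstHitProb a t x

lemma firstHitSum_bdTrans (a : ℕ → ℝ) {N t x : ℕ} (hN : x + t + 2 ≤ N) :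
    firstHitSum (bdTrans a) N t (x + 1) = firstHitProb a (t + 1) (x + 1) := by
  have : NeZero N := ⟨by omega⟩
  induction t generalizing x with
  | zero => rcases x with _ | x <;> simp [firstHitSum_zero, bdTrans, firstHitProb]
  | succ t ih =>
    rw [firstHitSum_succ, sum_bdTrans_succ_mul a
      (fun y => if y = 0 then 0 else firstHitSum (bdTrans a) N t y) (by omega)]
    rcases x with _ | x
    · simp only [if_neg (Nat.succ_ne_zero _), if_true, ih (x := 1) (by omega)]
      rfl
    · simp only [if_neg (Nat.succ_ne_zero _)]
      rw [ih (x := x + 2) (by omega), ih (x := x) (by omega)]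
      rfl

lemma firstReturnProb_bdTrans (a : ℕ → ℝ) (t : ℕ) :
    firstReturnProb (bdTrans a) (t + 1) = firstHitProb a t 1 := by
  rw [firstReturnProb_succ]
  rcases t with _ | t
  · simp [firstHitSum_zero, bdTrans, firstHitProb]
  · rw [firstHitSum_succ, sum_bdTrans_zero_mul a
      (fun y => if y = 0 then 0 else firstHitSum (bdTrans a) (t + 3) t y) (by omega),
      if_neg one_ne_zero, firstHitSum_bdTrans a (x := 0) (by omega)]

noncomputable def hitProb (a : ℕ → ℝ) (x : ℕ) : ℝ := ∑' t, firstHitProb a t x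

noncomputable def escapeProb (a : ℕ → ℝ) (x : ℕ) : ℝ := 1 - hitProb a x

def IsBDHarmonic (a h : ℕ → ℝ) : Prop :=
  ∀ x, h (x + 1) = a (x + 1) * h (x + 2) + (1 - a (x + 1)) * h x

/-- The paper's `L n`. -/
noncomputable def bdRatio (a : ℕ → ℝ) (n : ℕ) : ℝ := ∏ k ∈ Icc 1 n, a k / (1 - a k)

noncomputable def scaleFun (a : ℕ → ℝ) (x : ℕ) : ℝ := ∑ n ∈ range x, (bdRatio a n)⁻¹

section Harmonic

variable {a h g : ℕ → ℝ}

lemma isBDHarmonic_zero : IsBDHarmonic a 0 := fun x => by simp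

lemma IsBDHarmonic.const_mul (hh : IsBDHarmonic a h) (c : ℝ) :
    IsBDHarmonic a fun x => c * h x := fun x => by
  linear_combination c * hh x

lemma IsBDHarmonic.const_sub (hh : IsBDHarmonic a h) (c : ℝ) :
    IsBDHarmonic a fun x => c - h x := fun x => by
  linear_combination -hh x

lemma IsBDHarmonic.ext (ha : ∀ n, a (n + 1) ≠ 0) (hg : IsBDHarmonic a g)
    (hh : IsBDHarmonic a h) (h0 : g 0 = h 0) (h1 : g 1 = h 1) : g = h := by
  funext x
  induction x using Nat.twoStepInduction with
  | zero => exact h0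
  | one => exact h1
  | more n ihn ihn1 =>
    refine mul_left_cancel₀ (ha n) ?_
    linear_combination hh n - hg n + ihn1 - (1 - a (n + 1)) * ihn

end Harmonic

lemma firstHitProb_zero_right (a : ℕ → ℝ) (t : ℕ) :
    firstHitProb a t 0 = if t = 0 then 1 else 0 := by
  cases t <;> rfl

lemma escapeProb_zero (a : ℕ → ℝ) : escapeProb a 0 = 0 := by
  simp [escapeProb, hitProb, firstHitProb_zero_right]

section Hitting

variable {a : ℕ → ℝ} (ha : ∀ n, a (n + 1) ∈ Set.Icc 0 1)
include ha

lemma firstHitProb_nonneg (t x : ℕ) : 0 ≤ firstHitProb a t x := by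
  induction t generalizing x with
  | zero => unfold firstHitProb; positivity
  | succ t ih =>
    rcases x with _ | x
    · exact le_rfl
    · exact add_nonneg (mul_nonneg (ha x).1 (ih _)) (mul_nonneg (sub_nonneg.2 (ha x).2) (ih _))

lemma add_sum_firstHitProb_le_one {h : ℕ → ℝ} (hh : IsBDHarmonic a h) (h0 : h 0 = 0)
    (h1 : ∀ x, h x ≤ 1) (t x : ℕ) : h x + ∑ s ∈ range t, firstHitProb a s x ≤ 1 := by
  induction t generalizing x with
  | zero => simpa using h1 x
  | succ t ih =>
    rcases x with _ | x
    · simp [h0, firstHitProb_zero_right]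
    · obtain ⟨ha0, ha1⟩ := ha x
      have h2 := mul_le_mul_of_nonneg_left (ih (x + 2)) ha0
      have hx := mul_le_mul_of_nonneg_left (ih x) (sub_nonneg.2 ha1)
      rw [sum_range_succ', hh x]
      simp only [firstHitProb, sum_add_distrib, ← mul_sum, Nat.add_one_ne_zero, if_false]
      linarith

lemma summable_firstHitProb (x : ℕ) : Summable fun t => firstHitProb a t x :=
  summable_of_sum_range_le (firstHitProb_nonneg ha · x) fun t => by
    simpa using add_sum_firstHitProb_le_one ha isBDHarmonic_zero rfl (fun _ => zero_le_one) t x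

lemma le_escapeProb {h : ℕ → ℝ} (hh : IsBDHarmonic a h) (h0 : h 0 = 0) (h1 : ∀ x, h x ≤ 1)
    (x : ℕ) : h x ≤ escapeProb a x := by
  have := Real.tsum_le_of_sum_range_le (firstHitProb_nonneg ha · x) (c := 1 - h x) fun t => by
    linarith [add_sum_firstHitProb_le_one ha hh h0 h1 t x]
  rw [escapeProb, hitProb]
  linarith

lemma escapeProb_nonneg (x : ℕ) : 0 ≤ escapeProb a x :=
  le_escapeProb ha isBDHarmonic_zero rfl (fun _ => zero_le_one) x

lemma escapeProb_le_one (x : ℕ) : escapeProb a x ≤ 1 :=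
  sub_le_self _ (tsum_nonneg (firstHitProb_nonneg ha · x))

lemma isBDHarmonic_hitProb : IsBDHarmonic a (hitProb a) := fun x => by
  have hs := summable_firstHitProb ha
  calc hitProb a (x + 1) = ∑' t, firstHitProb a (t + 1) (x + 1) := by
        rw [hitProb, (hs _).tsum_eq_zero_add]; simp [firstHitProb]
    _ = ∑' t, (a (x + 1) * firstHitProb a t (x + 2) + (1 - a (x + 1)) * firstHitProb a t x) := rfl
    _ = a (x + 1) * hitProb a (x + 2) + (1 - a (x + 1)) * hitProb a x := by
      rw [((hs _).mul_left _).tsum_add ((hs _).mul_left _), tsum_mul_left, tsum_mul_left]; rfl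

lemma isBDHarmonic_escapeProb : IsBDHarmonic a (escapeProb a) :=
  (isBDHarmonic_hitProb ha).const_sub 1

end Hitting

section Scale

variable {a h : ℕ → ℝ}

lemma bdRatio_zero : bdRatio a 0 = 1 := by simp [bdRatio]

lemma bdRatio_succ (n : ℕ) : bdRatio a (n + 1) = bdRatio a n * (a (n + 1) / (1 - a (n + 1))) := by
  rw [bdRatio, bdRatio, prod_Icc_succ_top (by omega)]

lemma bdRatio_pos (ha : ∀ n, a (n + 1) ∈ Set.Ioo 0 1) (n : ℕ) : 0 < bdRatio a n := by
  refine prod_pos fun k hk => ?_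
  obtain ⟨j, rfl⟩ := Nat.exists_eq_add_of_le' (mem_Icc.1 hk).1
  exact div_pos (ha j).1 (sub_pos.2 (ha j).2)

lemma scaleFun_zero : scaleFun a 0 = 0 := by simp [scaleFun]

lemma scaleFun_one : scaleFun a 1 = 1 := by simp [scaleFun, bdRatio_zero]

lemma isBDHarmonic_scaleFun (ha : ∀ n, a (n + 1) ≠ 0) : IsBDHarmonic a (scaleFun a) := fun x => by
  simp only [scaleFun, sum_range_succ, bdRatio_succ, mul_inv, inv_div]
  field_simp [ha x]
  ring

lemma IsBDHarmonic.eq_mul_scaleFun (ha : ∀ n, a (n + 1) ≠ 0) (hh : IsBDHarmonic a h)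
    (h0 : h 0 = 0) : h = fun x => h 1 * scaleFun a x :=
  hh.ext ha ((isBDHarmonic_scaleFun ha).const_mul _) (by simp [h0, scaleFun_zero])
    (by simp [scaleFun_one])

end Scale

lemma isRecurrent_bdTrans_iff (a : ℕ → ℝ) : IsRecurrent (bdTrans a) ↔ escapeProb a 1 = 0 := by
  rw [IsRecurrent, tsum_congr (firstReturnProb_bdTrans a), escapeProb, sub_eq_zero, eq_comm]
  rfl

section Transience

variable {a : ℕ → ℝ} (ha : ∀ n, a (n + 1) ∈ Set.Ioo 0 1)
include ha

lemma summable_of_escapeProb_pos (hq : 0 < escapeProb a 1) :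
    Summable fun n => (bdRatio a n)⁻¹ := by
  have hIcc n : a (n + 1) ∈ Set.Icc 0 1 := Set.Ioo_subset_Icc_self (ha n)
  have hq_eq := (isBDHarmonic_escapeProb hIcc).eq_mul_scaleFun (fun n => (ha n).1.ne')
    (escapeProb_zero a)
  refine summable_of_sum_range_le (c := 1 / escapeProb a 1)
    (fun n => (inv_pos.2 (bdRatio_pos ha n)).le) fun x => ?_
  change scaleFun a x ≤ _
  rw [le_div_iff₀ hq, mul_comm, ← congrFun hq_eq x]
  exact escapeProb_le_one hIcc x

lemma escapeProb_pos_of_summable (hs : Summable fun n => (bdRatio a n)⁻¹) :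
    0 < escapeProb a 1 := by
  have hIcc n : a (n + 1) ∈ Set.Icc 0 1 := Set.Ioo_subset_Icc_self (ha n)
  set S := ∑' n, (bdRatio a n)⁻¹
  have hscale_le x : scaleFun a x ≤ S :=
    hs.sum_le_tsum _ fun n _ => (inv_pos.2 (bdRatio_pos ha n)).le
  have hS : 0 < S := zero_lt_one.trans_le (scaleFun_one (a := a) ▸ hscale_le 1)
  have hle := le_escapeProb hIcc ((isBDHarmonic_scaleFun fun n => (ha n).1.ne').const_mul S⁻¹)
    (by simp [scaleFun_zero]) (fun x => inv_mul_le_one_of_le₀ (hscale_le x) hS.le) 1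
  rw [scaleFun_one, mul_one] at hle
  exact (inv_pos.2 hS).trans_le hle

theorem escapeProb_pos_iff_summable : 0 < escapeProb a 1 ↔ Summable fun n => (bdRatio a n)⁻¹ :=
  ⟨summable_of_escapeProb_pos ha, escapeProb_pos_of_summable ha⟩

end Transience

theorem stmt14_general (a : ℕ → ℝ) (ha : ∀ n : ℕ, 1 ≤ n → 0 < a n ∧ a n < 1)
    (L : ℕ → ℝ) (hL : ∀ n : ℕ, L n = ∏ k ∈ Finset.Icc 1 n, a k / (1 - a k)) :
    IsRecurrent (bdTrans a) ↔ ¬ Summable (fun n : ℕ => 1 / L (n + 1)) := by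
  have hIoo n : a (n + 1) ∈ Set.Ioo 0 1 := ha (n + 1) (Nat.le_add_left 1 n)
  obtain rfl : L = bdRatio a := funext hL
  rw [isRecurrent_bdTrans_iff, summable_nat_add_iff 1 (f := fun n => 1 / bdRatio a n),
    ← (escapeProb_nonneg (fun n => Set.Ioo_subset_Icc_self (hIoo n)) 1).ge_iff_eq', ← not_lt]
  simp only [one_div, escapeProb_pos_iff_summable hIoo]

/-- A birth and death chain on `ℕ` with up-probabilities `α_n` (and `α_0 = 1`) is
recurrent if and only if `Σ_{n≥1} 1/L_n = ∞`, where `L_n = Π_{k=1}^n α_k/β_k`. -/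
theorem stmt14 (a : ℕ → ℝ) (ha0 : a 0 = 1) (ha : ∀ n : ℕ, 1 ≤ n → 0 < a n ∧ a n < 1)
    (L : ℕ → ℝ) (hL : ∀ n : ℕ, L n = ∏ k ∈ Finset.Icc 1 n, a k / (1 - a k)) :
    IsRecurrent (bdTrans a) ↔ ¬ Summable (fun n : ℕ => 1 / L (n + 1)) :=
  stmt14_general a ha L hL
end

section
/- Let η_G(x; n) be defined by P_G(x; n) = 1 - L_n^{-1} η_G(x; n), where P_G(x; n) satisfies the recursion P_G(x; n-1) = (1-x)(1 - u_n)/(1 - u_n P_G(x; n)) with u_n = L_n/(L_{n-1} + L_n). Then for all N ≥ n, 1/η_G(x; n-1) ≤ 1/η_G(x; N) + Σ_{k=n-1}^{N-1} 1/L_k. -/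
open Finset

/-! With `a = L (n-1)`, `b = L n` and `e = η n = b (1 - P n)`, the recursion becomes
`η (n-1) = a (e + x a) / (a + e)`, i.e. `1/η (n-1) = 1/η n + 1/L (n-1) - x a / (e η (n-1))`.
Dropping the negative last term and telescoping gives the bound. -/

theorem Finset.le_add_sum_Ico_of_le_succ_add {α : Type*} [AddCommGroup α] [PartialOrder α]
    [IsOrderedAddMonoid α] {f g : ℕ → α} (h : ∀ k, f k ≤ f (k + 1) + g k) {m N : ℕ}
    (hmN : m ≤ N) : f m ≤ f N + ∑ k ∈ Ico m N, g k := by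
  have htele : ∑ k ∈ Ico m N, (f k - f (k + 1)) = f m - f N := by
    simpa only [neg_sub_neg] using sum_Ico_sub (fun k => -f k) hmN
  rw [← sub_le_iff_le_add', ← htele]
  exact sum_le_sum fun k _ => sub_le_iff_le_add'.2 (h k)

noncomputable def firstReturnStep (x a b p : ℝ) : ℝ :=
  (1 - x) * (1 - b / (a + b)) / (1 - b / (a + b) * p)

section FirstReturnStep

variable {x a b p : ℝ}

theorem mul_one_sub_firstReturnStep (ha : 0 < a) (hb : 0 < b) (hp : p < 1) :
    a * (1 - firstReturnStep x a b p) = a * (b * (1 - p) + x * a) / (a + b * (1 - p)) := by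
  have hab : a + b ≠ 0 := by positivity
  have hae : a + b * (1 - p) ≠ 0 := by nlinarith
  have hden : 1 - b / (a + b) * p = (a + b * (1 - p)) / (a + b) := by field_simp; ring
  rw [firstReturnStep, hden]
  field_simp
  ring

theorem one_div_le_one_div_add_one_div (ha : 0 < a) {e : ℝ} (he : 0 < e) (hx : 0 ≤ x) :
    1 / (a * (e + x * a) / (a + e)) ≤ 1 / e + 1 / a := by
  rw [one_div_div, div_add_div _ _ he.ne' ha.ne', one_mul, mul_one, mul_comm e a]
  exact div_le_div_of_nonneg_left (by positivity) (by positivity)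
    (mul_le_mul_of_nonneg_left (by nlinarith [mul_nonneg hx ha.le]) ha.le)

theorem one_div_mul_one_sub_firstReturnStep_le (ha : 0 < a) (hb : 0 < b) (hp : p < 1)
    (hx : 0 ≤ x) :
    1 / (a * (1 - firstReturnStep x a b p)) ≤ 1 / (b * (1 - p)) + 1 / a := by
  rw [mul_one_sub_firstReturnStep ha hb hp]
  exact one_div_le_one_div_add_one_div ha (mul_pos hb (sub_pos.2 hp)) hx

end FirstReturnStep

theorem stmt15_general (x : ℝ) (hx0 : 0 < x)
    (L : ℕ → ℝ) (hL : ∀ k, 1 ≤ L k)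
    (P : ℕ → ℝ) (hP : ∀ n, 0 < P n ∧ P n < 1)
    (hrec : ∀ n : ℕ, 1 ≤ n →
      P (n - 1) = (1 - x) * (1 - L n / (L (n - 1) + L n)) /
        (1 - (L n / (L (n - 1) + L n)) * P n))
    (η : ℕ → ℝ) (hη : ∀ n, η n = L n * (1 - P n)) :
    ∀ n N : ℕ, 1 ≤ n → n ≤ N →
      1 / η (n - 1) ≤ 1 / η N + ∑ k ∈ Finset.Ico (n - 1) N, 1 / L k := by
  intro n N hn hnN
  have hstep : ∀ k, 1 / η k ≤ 1 / η (k + 1) + 1 / L k := fun k => by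
    have hrec_k := hrec (k + 1) k.succ_pos
    rw [Nat.add_sub_cancel] at hrec_k
    rw [hη k, hη (k + 1), hrec_k]
    exact one_div_mul_one_sub_firstReturnStep_le (by linarith [hL k])
      (by linarith [hL (k + 1)]) (hP (k + 1)).2 hx0.le
  exact le_add_sum_Ico_of_le_succ_add hstep (by omega)

/-- Telescoping bound for the resistance recursion: if
`P(n-1) = (1-x)(1-u_n)/(1 - u_n P(n))` with `u_n = L_n/(L_{n-1}+L_n)` and
`η_n = L_n (1 - P(n))`, then `1/η_{n-1} ≤ 1/η_N + Σ_{k=n-1}^{N-1} 1/L_k`. -/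
theorem stmt15 (x : ℝ) (hx0 : 0 < x) (hx1 : x < 1)
    (L : ℕ → ℝ) (hL : ∀ k, 1 ≤ L k)
    (P : ℕ → ℝ) (hP : ∀ n, 0 < P n ∧ P n < 1)
    (hrec : ∀ n : ℕ, 1 ≤ n →
      P (n - 1) = (1 - x) * (1 - L n / (L (n - 1) + L n)) /
        (1 - (L n / (L (n - 1) + L n)) * P n))
    (η : ℕ → ℝ) (hη : ∀ n, η n = L n * (1 - P n)) :
    ∀ n N : ℕ, 1 ≤ n → n ≤ N →
      1 / η (n - 1) ≤ 1 / η N + ∑ k ∈ Finset.Ico (n - 1) N, 1 / L k :=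
  stmt15_general x hx0 L hL P hP hrec η hη
end
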